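/- arXiv:1503.07717 — 2 statements merged into one kernel-verified Lean document; each statement's English description precedes it below -/
import Mathlib

section
/- If X is an answer set of a normal propositional program P, then there exists an enumeration ⟨r_1,…,r_n⟩ of GR_P(X) such that for all i, body⁺(r_i) ⊆ head({r_j | j < i}), and additionally for all j > i, if body⁺(r_j) ⊆ head({r_k | k < i}) and body⁻(r_j) ⊆ body⁻({r_k | k < i}), then body⁻(r_i) ⊆ body⁻({r_k | k < i}). -/
structure Rule (α : Type) where
  head : α
  pos : Set α
  neg : Set α

variable {α : Type}

def TP (P : Set (Rule α)) (X : Set α) : Set α :=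
  {a | ∃ r ∈ P, r.head = a ∧ r.pos ⊆ X}

def Cn (P : Set (Rule α)) : Set α :=
  ⋂₀ {X | TP P X ⊆ X}

def reduct (P : Set (Rule α)) (X : Set α) : Set (Rule α) :=
  {r' | ∃ r ∈ P, r.neg ∩ X = ∅ ∧ r' = ⟨r.head, r.pos, ∅⟩}

def AnswerSet (P : Set (Rule α)) (X : Set α) : Prop :=
  X = Cn (reduct P X)

def GR (P : Set (Rule α)) (X : Set α) : Set (Rule α) :=
  {r ∈ P | r.pos ⊆ X ∧ r.neg ∩ X = ∅}

def heads (R : Set (Rule α)) : Set α := Rule.head '' R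

def negs (R : Set (Rule α)) : Set α := ⋃ r ∈ R, r.neg

def prefixSet (l : List (Rule α)) (i : ℕ) : Set (Rule α) :=
  {r | ∃ j < i, l[j]? = some r}

def Grounded (R : Set (Rule α)) : Prop :=
  ∃ l : List (Rule α), l.Nodup ∧ (∀ r, r ∈ R ↔ r ∈ l) ∧
    ∀ i (hi : i < l.length), (l.get ⟨i, hi⟩).pos ⊆ heads (prefixSet l i)

/-!
If `X` is an answer set, no nonempty `S ⊆ GR P X` is unfounded: otherwise the heads of
`GR P X \ S` would be closed under the reduct, so by minimality they would contain `X`, and hence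
the positive body of any rule of `S`. So one can always pick a next rule whose positive body is
supported by the rules already placed; among those, pick one adding no new negative atoms
whenever such a rule exists. Choosing greedily in this way until `GR P X` is exhausted yields the
enumeration.
-/

lemma prefixSet_zero (l : List (Rule α)) : prefixSet l 0 = ∅ := by
  ext s
  simp [prefixSet]

lemma prefixSet_cons_succ (r : Rule α) (l : List (Rule α)) (k : ℕ) :
    prefixSet (r :: l) (k + 1) = insert r (prefixSet l k) := by
  ext s
  simp only [prefixSet, Set.mem_ofPred_eq, Set.mem_insert_iff]
  constructor
  · rintro ⟨_ | j, hj, hs⟩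
    · exact .inl (Option.some.inj hs).symm
    · exact .inr ⟨j, by omega, hs⟩
  · rintro (rfl | ⟨j, hj, hs⟩)
    · exact ⟨0, by omega, rfl⟩
    · exact ⟨j + 1, by omega, hs⟩

/-- `l` lists rules to be applied after those in `B`. -/
def IsGreedyEnumeration (B : Set (Rule α)) (l : List (Rule α)) : Prop :=
  ∀ i (hi : i < l.length),
    (l.get ⟨i, hi⟩).pos ⊆ heads (B ∪ prefixSet l i) ∧
    ∀ j (hj : j < l.length), i < j →
      (l.get ⟨j, hj⟩).pos ⊆ heads (B ∪ prefixSet l i) →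
      (l.get ⟨j, hj⟩).neg ⊆ negs (B ∪ prefixSet l i) →
      (l.get ⟨i, hi⟩).neg ⊆ negs (B ∪ prefixSet l i)

lemma isGreedyEnumeration_nil (B : Set (Rule α)) : IsGreedyEnumeration B [] :=
  fun _ hi => absurd hi (Nat.not_lt_zero _)

lemma IsGreedyEnumeration.cons {B : Set (Rule α)} {r : Rule α} {l : List (Rule α)}
    (hl : IsGreedyEnumeration (insert r B) l) (hpos : r.pos ⊆ heads B)
    (hneg : ∀ s ∈ l, s.pos ⊆ heads B → s.neg ⊆ negs B → r.neg ⊆ negs B) :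
    IsGreedyEnumeration B (r :: l) := by
  rintro (_ | i) hi
  · rw [prefixSet_zero, Set.union_empty]
    refine ⟨hpos, ?_⟩
    rintro (_ | j) hj hij hjpos hjneg
    · omega
    · exact hneg _ (List.get_mem _ _) hjpos hjneg
  · have hB : B ∪ prefixSet (r :: l) (i + 1) = insert r B ∪ prefixSet l i := by
      rw [prefixSet_cons_succ, Set.union_insert, Set.insert_union]
    obtain ⟨hipos, hineg⟩ := hl i (by simpa using hi)
    rw [hB]
    refine ⟨hipos, ?_⟩
    rintro (_ | j) hj hij
    · omega
    · exact hineg j (by simpa using hj) (by omega)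

/-- `G` has no nonempty unfounded subset. -/
def Founded (G : Set (Rule α)) : Prop :=
  ∀ S ⊆ G, S.Nonempty → ∃ r ∈ S, r.pos ⊆ heads (G \ S)

lemma TP_Cn_subset (Q : Set (Rule α)) : TP Q (Cn Q) ⊆ Cn Q := by
  rintro a ⟨r, hrQ, rfl, hpos⟩ Y hY
  exact hY ⟨r, hrQ, rfl, hpos.trans (Set.sInter_subset_of_mem hY)⟩

namespace AnswerSet

variable {P : Set (Rule α)} {X : Set α}

lemma heads_GR_subset (hX : AnswerSet P X) : heads (GR P X) ⊆ X := by
  rintro a ⟨r, ⟨hrP, hpos, hneg⟩, rfl⟩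
  have hTP : TP (reduct P X) X ⊆ X := by
    have h := TP_Cn_subset (reduct P X)
    rwa [← hX] at h
  exact hTP ⟨⟨r.head, r.pos, ∅⟩, ⟨r, hrP, hneg, rfl⟩, rfl, hpos⟩

lemma founded_GR (hX : AnswerSet P X) : Founded (GR P X) := by
  intro S hSG ⟨r₀, hr₀⟩
  by_contra! hS
  set Z := heads (GR P X \ S)
  have hZX : Z ⊆ X := (Set.image_mono Set.sdiff_subset).trans hX.heads_GR_subset
  have hZ : TP (reduct P X) Z ⊆ Z := by
    rintro a ⟨_, ⟨r, hrP, hneg, rfl⟩, rfl, hpos⟩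
    have hrS : r ∉ S := fun hrS => hS r hrS hpos
    exact ⟨r, ⟨⟨hrP, hpos.trans hZX, hneg⟩, hrS⟩, rfl⟩
  have hXZ : X ⊆ Z := hX.trans_subset (Set.sInter_subset_of_mem hZ)
  exact hS r₀ hr₀ ((hSG hr₀).2.1.trans hXZ)

end AnswerSet

lemma Founded.exists_greedyEnumeration {G R : Set (Rule α)} (hG : Founded G)
    (hR : R.Finite) (hRG : R ⊆ G) :
    ∃ l : List (Rule α), l.Nodup ∧ (∀ r, r ∈ R ↔ r ∈ l) ∧ IsGreedyEnumeration (G \ R) l := by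
  rcases R.eq_empty_or_nonempty with rfl | hne
  · exact ⟨[], List.nodup_nil, by simp, isGreedyEnumeration_nil _⟩
  obtain ⟨r, hrR, hrpos, hrneg⟩ : ∃ r ∈ R, r.pos ⊆ heads (G \ R) ∧
      ∀ s ∈ R, s.pos ⊆ heads (G \ R) → s.neg ⊆ negs (G \ R) → r.neg ⊆ negs (G \ R) := by
    by_cases hquiet : ∃ s ∈ R, s.pos ⊆ heads (G \ R) ∧ s.neg ⊆ negs (G \ R)
    · obtain ⟨s, hsR, hspos, hsneg⟩ := hquiet
      exact ⟨s, hsR, hspos, fun _ _ _ _ => hsneg⟩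
    · obtain ⟨r, hrR, hrpos⟩ := hG R hRG hne
      exact ⟨r, hrR, hrpos, fun s hsR hspos hsneg => absurd ⟨s, hsR, hspos, hsneg⟩ hquiet⟩
  have hdecr : (R \ {r}).ncard < R.ncard := Set.ncard_sdiff_singleton_lt_of_mem hrR hR
  obtain ⟨l, hnodup, hmem, hl⟩ := hG.exists_greedyEnumeration (R := R \ {r})
    (hR.subset Set.sdiff_subset) (Set.sdiff_subset.trans hRG)
  have hrl : r ∉ l := fun h => ((hmem r).2 h).2 rfl
  have hbase : G \ (R \ {r}) = insert r (G \ R) := by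
    rw [Set.sdiff_sdiff_right, Set.inter_singleton_of_mem (hRG hrR), Set.union_singleton]
  refine ⟨r :: l, List.nodup_cons.2 ⟨hrl, hnodup⟩, fun s => ?_, ?_⟩
  · by_cases hsr : s = r
    · simp [hsr, hrR]
    · simp [hsr, ← hmem]
  · exact (hbase ▸ hl).cons hrpos fun s hs => hrneg s ((hmem s).2 hs).1
termination_by R.ncard

theorem answerSet_enumeration (α : Type) (P : Set (Rule α)) (hP : P.Finite)
    (X : Set α) (hX : AnswerSet P X) :
    ∃ l : List (Rule α), l.Nodup ∧ (∀ r, r ∈ GR P X ↔ r ∈ l) ∧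
      ∀ i (hi : i < l.length),
        (l.get ⟨i, hi⟩).pos ⊆ heads (prefixSet l i) ∧
        (∀ j (hj : j < l.length), i < j →
          (l.get ⟨j, hj⟩).pos ⊆ heads (prefixSet l i) →
          (l.get ⟨j, hj⟩).neg ⊆ negs (prefixSet l i) →
          (l.get ⟨i, hi⟩).neg ⊆ negs (prefixSet l i)) := by
  have hfin : (GR P X).Finite := hP.subset fun _ hr => hr.1
  obtain ⟨l, hnodup, hmem, hl⟩ := hX.founded_GR.exists_greedyEnumeration hfin subset_rfl
  refine ⟨l, hnodup, hmem, fun i hi => ?_⟩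
  simpa only [Set.sdiff_self, Set.empty_union] using hl i hi
end

section
/- Let P be a normal propositional program and ⟨R_i, ⟨IN_i, OUT_i⟩⟩ an ASPeRiX computation for P that converges at step n (Δ_cho at step n is empty, and the computation is stable from n on). Then R_n = GR_P(IN_n), where GR_P(X) = { r ∈ P | body⁺(r) ⊆ X, body⁻(r) ∩ X = ∅ }. -/
variable {α : Type}

def Dpro (P R : Set (Rule α)) (IN OUT : Set α) : Set (Rule α) :=
  {r ∈ P | r ∉ R ∧ r.pos ⊆ IN ∧ r.neg ⊆ OUT}

def Dcho (P R : Set (Rule α)) (IN : Set α) : Set (Rule α) :=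
  {r ∈ P | r ∉ R ∧ r.pos ⊆ IN ∧ r.neg ∩ IN = ∅}

structure AspComp {α : Type} (P : Set (Rule α)) (bot : α) where
  R : ℕ → Set (Rule α)
  IN : ℕ → Set α
  OUT : ℕ → Set α
  init_R : R 0 = ∅
  init_IN : IN 0 = ∅
  init_OUT : OUT 0 = {bot}
  disj : ∀ i, IN i ∩ OUT i = ∅
  revision : ∀ i, 1 ≤ i →
    (∃ r ∈ Dpro P (R (i-1)) (IN (i-1)) (OUT (i-1)),
        R i = R (i-1) ∪ {r} ∧ IN i = IN (i-1) ∪ {r.head} ∧ OUT i = OUT (i-1)) ∨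
    (Dpro P (R (i-1)) (IN (i-1)) (OUT (i-1)) = ∅ ∧
      ∃ r ∈ Dcho P (R (i-1)) (IN (i-1)),
        R i = R (i-1) ∪ {r} ∧ IN i = IN (i-1) ∪ {r.head} ∧
        OUT i = OUT (i-1) ∪ r.neg) ∨
    (R i = R (i-1) ∧ IN i = IN (i-1) ∧ OUT i = OUT (i-1))
  convergence : ∃ i, Dcho P (R i) (IN i) = ∅

/-!
Every step of the computation adds a rule whose positive body is already in `IN` and whose
negative body is (or becomes) part of `OUT`; since `IN` and `OUT` only grow and stay disjoint,
`R i ⊆ GR P (IN i)` at every step. Conversely, a rule of `GR P (IN n)` missing from `R n` would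
lie in `Δ_cho` at step `n`.
-/

namespace AspComp

variable {P : Set (Rule α)} {bot : α} (C : AspComp P bot)

lemma revision_succ (k : ℕ) :
    (∃ r ∈ Dpro P (C.R k) (C.IN k) (C.OUT k),
        C.R (k+1) = C.R k ∪ {r} ∧ C.IN (k+1) = C.IN k ∪ {r.head} ∧ C.OUT (k+1) = C.OUT k) ∨
    (Dpro P (C.R k) (C.IN k) (C.OUT k) = ∅ ∧
      ∃ r ∈ Dcho P (C.R k) (C.IN k),
        C.R (k+1) = C.R k ∪ {r} ∧ C.IN (k+1) = C.IN k ∪ {r.head} ∧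
        C.OUT (k+1) = C.OUT k ∪ r.neg) ∨
    (C.R (k+1) = C.R k ∧ C.IN (k+1) = C.IN k ∧ C.OUT (k+1) = C.OUT k) :=
  C.revision (k+1) (Nat.le_add_left 1 k)

lemma IN_mono : Monotone C.IN := by
  refine monotone_nat_of_le_succ fun k => ?_
  rcases C.revision_succ k with ⟨_, _, -, hIN, -⟩ | ⟨-, _, _, -, hIN, -⟩ | ⟨-, hIN, -⟩ <;>
    rw [hIN]
  exacts [Set.subset_union_left, Set.subset_union_left]

lemma OUT_mono : Monotone C.OUT := by
  refine monotone_nat_of_le_succ fun k => ?_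
  rcases C.revision_succ k with ⟨_, _, -, -, hOUT⟩ | ⟨-, _, _, -, -, hOUT⟩ | ⟨-, -, hOUT⟩ <;>
    rw [hOUT]
  exact Set.subset_union_left

lemma mem_R_succ {k : ℕ} {r : Rule α} (hr : r ∈ C.R (k+1)) :
    r ∈ C.R k ∨ r ∈ P ∧ r.pos ⊆ C.IN k ∧ r.neg ⊆ C.OUT (k+1) := by
  rcases C.revision_succ k with
    ⟨r', ⟨hP, -, hpos, hneg⟩, hR, -, hOUT⟩ | ⟨-, r', ⟨hP, -, hpos, -⟩, hR, -, hOUT⟩ | ⟨hR, -⟩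
  · rw [hR] at hr
    rcases hr with hr | rfl
    exacts [Or.inl hr, Or.inr ⟨hP, hpos, hOUT ▸ hneg⟩]
  · rw [hR] at hr
    rcases hr with hr | rfl
    exacts [Or.inl hr, Or.inr ⟨hP, hpos, hOUT ▸ Set.subset_union_right⟩]
  · exact Or.inl (hR ▸ hr)

lemma of_mem_R {i : ℕ} {r : Rule α} (hr : r ∈ C.R i) :
    r ∈ P ∧ r.pos ⊆ C.IN i ∧ r.neg ⊆ C.OUT i := by
  induction i with
  | zero => simp [C.init_R] at hr
  | succ k ih =>
    rcases C.mem_R_succ hr with hr | ⟨hP, hpos, hneg⟩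
    · obtain ⟨hP, hpos, hneg⟩ := ih hr
      exact ⟨hP, hpos.trans (C.IN_mono k.le_succ), hneg.trans (C.OUT_mono k.le_succ)⟩
    · exact ⟨hP, hpos.trans (C.IN_mono k.le_succ), hneg⟩

lemma R_subset_GR (i : ℕ) : C.R i ⊆ GR P (C.IN i) := by
  intro r hr
  obtain ⟨hP, hpos, hneg⟩ := C.of_mem_R hr
  have hdisj : Disjoint (C.IN i) (C.OUT i) := Set.disjoint_iff_inter_eq_empty.2 (C.disj i)
  exact ⟨hP, hpos, Set.disjoint_iff_inter_eq_empty.1 (hdisj.symm.mono_left hneg)⟩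

end AspComp

lemma GR_subset_of_Dcho_eq_empty {P R : Set (Rule α)} {X : Set α} (h : Dcho P R X = ∅) :
    GR P X ⊆ R := by
  intro r ⟨hP, hpos, hneg⟩
  by_contra hr
  exact (h ▸ ⟨hP, hr, hpos, hneg⟩ : r ∈ (∅ : Set (Rule α)))

theorem convergence_R_eq_GR_general (α : Type) (P : Set (Rule α)) (bot : α)
    (C : AspComp P bot) (n : ℕ) (hn : Dcho P (C.R n) (C.IN n) = ∅) :
    C.R n = GR P (C.IN n) :=
  (C.R_subset_GR n).antisymm (GR_subset_of_Dcho_eq_empty hn)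

theorem convergence_R_eq_GR (α : Type) (P : Set (Rule α)) (bot : α)
    (C : AspComp P bot) (n : ℕ) (hn : Dcho P (C.R n) (C.IN n) = ∅)
    (hstab : ∀ j, n ≤ j → C.R j = C.R n ∧ C.IN j = C.IN n ∧ C.OUT j = C.OUT n) :
    C.R n = GR P (C.IN n) :=
  convergence_R_eq_GR_general α P bot C n hn
end
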